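/- Invertibility of (⟨▲⟩L): for every nominal i, all nominals j,k, all path expressions α,β, every comparison ▲ ∈ {=_c, ≠_c}, and all finite sets Γ,Δ of node expressions of the admissible forms, if @_i⟨α ▲ β⟩, Γ ⊢_G Δ then @_i⟨α⟩j, @_i⟨β⟩k, ⟨j: ▲ k:⟩, Γ ⊢_G Δ. -/
import Mathlib


namespace HXPathD

mutual
  inductive Path (P N M C : Type) : Type where
    | mod  : M → Path P N M C
    | nom  : N → Path P N M C
    | test : Node P N M C → Path P N M C
    | comp : Path P N M C → Path P N M C → Path P N M C

  inductive Node (P N M C : Type) : Type where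
    | prop : P → Node P N M C
    | nom  : N → Node P N M C
    | bot  : Node P N M C
    | impl : Node P N M C → Node P N M C → Node P N M C
    | at   : N → Node P N M C → Node P N M C
    | dia  : M → Node P N M C → Node P N M C
    | eq   : Path P N M C → C → Path P N M C → Node P N M C
    | neq  : Path P N M C → C → Path P N M C → Node P N M C
end

variable {P N M C : Type}

/-- Abbreviations. -/
def Node.neg (φ : Node P N M C) : Node P N M C := .impl φ .bot
def Node.top : Node P N M C := .impl .bot .bot
def Node.and (φ ψ : Node P N M C) : Node P N M C := .neg (.impl φ (.neg ψ))
def Node.iff (φ ψ : Node P N M C) : Node P N M C := .and (.impl φ ψ) (.impl ψ φ)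
def Node.box (a : M) (φ : Node P N M C) : Node P N M C := .neg (.dia a (.neg φ))
def Path.eps : Path P N M C := .test .top

/-- The node expression ⟨α⟩φ, obtained by the abbreviations
    ⟨j:⟩φ := @_jφ, ⟨ψ?⟩φ := ψ∧φ, ⟨αβ⟩φ := ⟨α⟩⟨β⟩φ (with ⟨a⟩φ primitive). -/
def Path.dia : Path P N M C → Node P N M C → Node P N M C
  | .mod a, φ => .dia a φ
  | .nom j, φ => .at j φ
  | .test ψ, φ => .and ψ φ
  | .comp α β, φ => α.dia (β.dia φ)

/-- A comparison ▲ ∈ {=_c, ≠_c : c ∈ Cmp}. -/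
inductive Comparison (C : Type) : Type where
  | ceq  : C → Comparison C
  | cneq : C → Comparison C

/-- The node expression ⟨α ▲ β⟩. -/
def Comparison.node : Comparison C → Path P N M C → Path P N M C → Node P N M C
  | .ceq c, α, β => .eq α c β
  | .cneq c, α, β => .neq α c β

/-- A hybrid data model. -/
structure Model (P N M C : Type) where
  W : Type
  nonempty : Nonempty W
  R : M → W → W → Prop
  E : C → W → W → Prop
  E_equiv : ∀ c, Equivalence (E c)
  g : N → W
  V : P → W → Prop

mutual
  def Model.satPath (𝔐 : Model P N M C) : Path P N M C → 𝔐.W → 𝔐.W → Prop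
    | .mod a, n, n' => 𝔐.R a n n'
    | .nom i, _, n' => 𝔐.g i = n'
    | .test φ, n, n' => n = n' ∧ 𝔐.sat φ n
    | .comp α β, n, n' => ∃ n'', 𝔐.satPath α n n'' ∧ 𝔐.satPath β n'' n'

  def Model.sat (𝔐 : Model P N M C) : Node P N M C → 𝔐.W → Prop
    | .prop p, n => 𝔐.V p n
    | .nom i, n => 𝔐.g i = n
    | .bot, _ => False
    | .impl φ ψ, n => 𝔐.sat φ n → 𝔐.sat ψ n
    | .at i φ, _ => 𝔐.sat φ (𝔐.g i)
    | .dia a φ, n => ∃ n', 𝔐.R a n n' ∧ 𝔐.sat φ n'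
    | .eq α c β, n => ∃ n' n'', 𝔐.satPath α n n' ∧ 𝔐.satPath β n n'' ∧ 𝔐.E c n' n''
    | .neq α c β, n => ∃ n' n'', 𝔐.satPath α n n' ∧ 𝔐.satPath β n n'' ∧ ¬ 𝔐.E c n' n''
end

mutual
  def Path.noms : Path P N M C → Set N
    | .mod _ => ∅
    | .nom i => {i}
    | .test φ => φ.noms
    | .comp α β => α.noms ∪ β.noms

  def Node.noms : Node P N M C → Set N
    | .prop _ => ∅
    | .nom i => {i}
    | .bot => ∅
    | .impl φ ψ => φ.noms ∪ ψ.noms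
    | .at i φ => insert i φ.noms
    | .dia _ φ => φ.noms
    | .eq α _ β => α.noms ∪ β.noms
    | .neq α _ β => α.noms ∪ β.noms
end

/-- Node expressions of the admissible forms for sequents:
    ⟨i: ▲ j:⟩ or @_iφ. -/
def Node.Admissible : Node P N M C → Prop
  | .at _ _ => True
  | .eq (.nom _) _ (.nom _) => True
  | .neq (.nom _) _ (.nom _) => True
  | _ => False

/-- A sequent: antecedent and consequent. -/
abbrev Sequent (P N M C : Type) := Set (Node P N M C) × Set (Node P N M C)

/-- The nominal `j` does not occur in the set `S`. -/
def FreshIn (j : N) (S : Set (Node P N M C)) : Prop := ∀ φ ∈ S, j ∉ φ.noms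

/-- Shape restriction on the axiom (Ax). -/
inductive AxForm : Node P N M C → Prop where
  | prop (i : N) (p : P) : AxForm (.at i (.prop p))
  | nom (i j : N) : AxForm (.at i (.nom j))
  | eq (i : N) (c : C) (j : N) : AxForm (.eq (.nom i) c (.nom j))

/-- Shape restriction on the rule (S1): φ is p, ⊥ or ⟨a⟩k. -/
inductive S1Form : Node P N M C → Prop where
  | prop (p : P) : S1Form (.prop p)
  | bot : S1Form .bot
  | dia (a : M) (k : N) : S1Form (.dia a (.nom k))

/-- One rule instance of the sequent calculus G: `Step cut prems concl` holds iff
    `concl` may be inferred from the premisses `prems` by a rule of G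
    (when `cut = false`, the rule (Cut) is excluded). -/
inductive Step (cut : Bool) : List (Sequent P N M C) → Sequent P N M C → Prop where
  | ax {Γ Δ : Set (Node P N M C)} {φ} (h : AxForm φ) :
      Step cut [] (insert φ Γ, insert φ Δ)
  | bot {Γ Δ : Set (Node P N M C)} (i : N) :
      Step cut [] (insert (.at i .bot) Γ, Δ)
  | implL {Γ Δ : Set (Node P N M C)} (i : N) (φ ψ : Node P N M C) :
      Step cut [(Γ, insert (.at i φ) Δ), (insert (.at i ψ) Γ, Δ)]
        (insert (.at i (.impl φ ψ)) Γ, Δ)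
  | implR {Γ Δ : Set (Node P N M C)} (i : N) (φ ψ : Node P N M C) :
      Step cut [(insert (.at i φ) Γ, insert (.at i ψ) Δ)]
        (Γ, insert (.at i (.impl φ ψ)) Δ)
  | atT {Γ Δ : Set (Node P N M C)} (i : N) :
      Step cut [(insert (.at i (.nom i)) Γ, Δ)] (Γ, Δ)
  | at5 {Γ Δ : Set (Node P N M C)} (i j k : N) :
      Step cut
        [(insert (.at j (.nom k)) (insert (.at i (.nom j)) (insert (.at i (.nom k)) Γ)), Δ)]
        (insert (.at i (.nom j)) (insert (.at i (.nom k)) Γ), Δ)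
  | nomRule {Γ Δ : Set (Node P N M C)} (i j : N)
      (hj : FreshIn j Γ) (hj' : FreshIn j Δ) :
      Step cut [(insert (.at i (.nom j)) Γ, Δ)] (Γ, Δ)
  | s1 {Γ Δ : Set (Node P N M C)} (i j : N) {φ : Node P N M C} (h : S1Form φ) :
      Step cut
        [(insert (.at j φ) (insert (.at i (.nom j)) (insert (.at i φ) Γ)), Δ)]
        (insert (.at i (.nom j)) (insert (.at i φ) Γ), Δ)
  | s2 {Γ Δ : Set (Node P N M C)} (i j k : N) (a : M) :
      Step cut
        [(insert (.at i (.dia a (.nom k)))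
            (insert (.at j (.nom k)) (insert (.at i (.dia a (.nom j))) Γ)), Δ)]
        (insert (.at j (.nom k)) (insert (.at i (.dia a (.nom j))) Γ), Δ)
  | s3 {Γ Δ : Set (Node P N M C)} (i j k : N) (c : C) :
      Step cut
        [(insert (.eq (.nom j) c (.nom k))
            (insert (.at i (.nom j)) (insert (.eq (.nom i) c (.nom k)) Γ)), Δ)]
        (insert (.at i (.nom j)) (insert (.eq (.nom i) c (.nom k)) Γ), Δ)
  | atL {Γ Δ : Set (Node P N M C)} (i j : N) (φ : Node P N M C) :
      Step cut [(insert (.at i φ) Γ, Δ)] (insert (.at j (.at i φ)) Γ, Δ)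
  | atR {Γ Δ : Set (Node P N M C)} (i j : N) (φ : Node P N M C) :
      Step cut [(Γ, insert (.at i φ) Δ)] (Γ, insert (.at j (.at i φ)) Δ)
  | diaL {Γ Δ : Set (Node P N M C)} (i j : N) (a : M) (φ : Node P N M C)
      (hj : FreshIn j (insert (.at i (.dia a φ)) Γ)) (hj' : FreshIn j Δ) :
      Step cut
        [(insert (.at i (.dia a (.nom j))) (insert (.at j φ) Γ), Δ)]
        (insert (.at i (.dia a φ)) Γ, Δ)
  | diaR {Γ Δ : Set (Node P N M C)} (i j : N) (a : M) (φ : Node P N M C) :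
      Step cut
        [(insert (.at i (.dia a (.nom j))) Γ,
          insert (.at i (.dia a φ)) (insert (.at j φ) Δ))]
        (insert (.at i (.dia a (.nom j))) Γ, insert (.at i (.dia a φ)) Δ)
  | cmpL {Γ Δ : Set (Node P N M C)} (i j k : N) (α β : Path P N M C)
      (b : Comparison C) (hjk : j ≠ k)
      (hj : FreshIn j (insert (.at i (b.node α β)) Γ)) (hj' : FreshIn j Δ)
      (hk : FreshIn k (insert (.at i (b.node α β)) Γ)) (hk' : FreshIn k Δ) :
      Step cut
        [(insert (.at i (α.dia (.nom j)))
            (insert (.at i (β.dia (.nom k)))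
              (insert (b.node (.nom j) (.nom k)) Γ)), Δ)]
        (insert (.at i (b.node α β)) Γ, Δ)
  | cmpR {Γ Δ : Set (Node P N M C)} (i j k : N) (α β : Path P N M C)
      (b : Comparison C) :
      Step cut
        [(insert (.at i (α.dia (.nom j))) (insert (.at i (β.dia (.nom k))) Γ),
          insert (.at i (b.node α β)) (insert (b.node (.nom j) (.nom k)) Δ))]
        (insert (.at i (α.dia (.nom j))) (insert (.at i (β.dia (.nom k))) Γ),
          insert (.at i (b.node α β)) Δ)
  | eqT {Γ Δ : Set (Node P N M C)} (i : N) (c : C) :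
      Step cut [(insert (.eq (.nom i) c (.nom i)) Γ, Δ)] (Γ, Δ)
  | eq5 {Γ Δ : Set (Node P N M C)} (i j k : N) (c : C) :
      Step cut
        [(insert (.eq (.nom j) c (.nom k))
            (insert (.eq (.nom i) c (.nom j)) (insert (.eq (.nom i) c (.nom k)) Γ)), Δ)]
        (insert (.eq (.nom i) c (.nom j)) (insert (.eq (.nom i) c (.nom k)) Γ), Δ)
  | neqL {Γ Δ : Set (Node P N M C)} (i j : N) (c : C) :
      Step cut [(Γ, insert (.eq (.nom i) c (.nom j)) Δ)]
        (insert (.neq (.nom i) c (.nom j)) Γ, Δ)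
  | neqR {Γ Δ : Set (Node P N M C)} (i j : N) (c : C) :
      Step cut [(insert (.eq (.nom i) c (.nom j)) Γ, Δ)]
        (Γ, insert (.neq (.nom i) c (.nom j)) Δ)
  | cutRule {Γ Δ Γ' Δ' : Set (Node P N M C)} (φ : Node P N M C)
      (ha : φ.Admissible) (hc : cut = true) :
      Step cut [(Γ, insert φ Δ), (insert φ Γ', Δ')] (Γ ∪ Γ', Δ ∪ Δ')
  | wl {Γ Δ : Set (Node P N M C)} (φ : Node P N M C) (ha : φ.Admissible) :
      Step cut [(Γ, Δ)] (insert φ Γ, Δ)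
  | wr {Γ Δ : Set (Node P N M C)} (φ : Node P N M C) (ha : φ.Admissible) :
      Step cut [(Γ, Δ)] (Γ, insert φ Δ)

/-- Derivability in G (`Deriv true`) resp. in G without (Cut) (`Deriv false`):
    a derivation built from the rules whose leaves are instances of the
    zero-premiss rules (Ax) or (⊥). -/
inductive Deriv (cut : Bool) : Sequent P N M C → Prop where
  | step {prems : List (Sequent P N M C)} {concl : Sequent P N M C}
      (h : Step cut prems concl) (ih : ∀ s ∈ prems, Deriv cut s) : Deriv cut concl

/-- Γ ⊢_G Δ : the sequent is provable in G. -/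
def ProvableG (Γ Δ : Set (Node P N M C)) : Prop := Deriv true (Γ, Δ)

/-- M ⊩ φ : global satisfaction. -/
def Model.satG (𝔐 : Model P N M C) (φ : Node P N M C) : Prop := ∀ n, 𝔐.sat φ n

/-- Validity of a sequent. -/
def ValidSeq (S : Sequent P N M C) : Prop :=
  ∀ 𝔐 : Model P N M C, (∀ γ ∈ S.1, 𝔐.satG γ) → ∃ δ ∈ S.2, 𝔐.satG δ

/-- Formulas of the basic hybrid logic H(@): no data comparisons. -/
def Node.IsHybrid : Node P N M C → Prop
  | .prop _ => True
  | .nom _ => True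
  | .bot => True
  | .impl φ ψ => φ.IsHybrid ∧ ψ.IsHybrid
  | .at _ φ => φ.IsHybrid
  | .dia _ φ => φ.IsHybrid
  | .eq _ _ _ => False
  | .neq _ _ _ => False

/-- invertibility of (⟨▲⟩L). -/
theorem cmpL_invertible {P N M C : Type} [Countable P] [Infinite P] [Countable N] [Infinite N] [Finite M] [Finite C]
    (i j k : N) (α β : Path P N M C) (b : Comparison C) {Γ Δ : Set (Node P N M C)}
    (hGfin : Γ.Finite) (hDfin : Δ.Finite)
    (hGadm : ∀ ψ ∈ Γ, ψ.Admissible) (hDadm : ∀ ψ ∈ Δ, ψ.Admissible)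
    (h : ProvableG (insert (.at i (b.node α β)) Γ) Δ) :
    ProvableG
      (insert (.at i (α.dia (.nom j)))
        (insert (.at i (β.dia (.nom k)))
          (insert (b.node (.nom j) (.nom k)) Γ))) Δ := by
  classical
  set A : Node P N M C := .at i (α.dia (.nom j)) with hA
  set B : Node P N M C := .at i (β.dia (.nom k)) with hB
  set J : Node P N M C := b.node (.nom j) (.nom k) with hJ
  set F : Node P N M C := .at i (b.node α β) with hF
  have hadmJ : J.Admissible := by cases b <;> trivial
  have hadmA : A.Admissible := trivial
  have hadmB : B.Admissible := trivial
  have hadmF : F.Admissible := trivial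
  -- Premise 1 of cut: Γ' ⊢ Δ, F
  have h1 : Deriv true (insert A (insert B (insert J Γ)), insert F Δ) := by
    refine Deriv.step
      (Step.cmpR (Γ := insert J Γ) (Δ := Δ) i j k α β b) ?_
    intro s hs
    simp only [List.mem_singleton] at hs
    subst hs
    cases b with
    | ceq c =>
      have e1 : (insert A (insert B (insert J Γ)) : Set (Node P N M C))
          = insert J (insert A (insert B Γ)) := by
        ext x; simp only [Set.mem_insert_iff]; tauto
      have e2 : (insert F (insert J Δ) : Set (Node P N M C))
          = insert J (insert F Δ) := by
        ext x; simp only [Set.mem_insert_iff]; tauto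
      have hJeq : J = Node.eq (.nom j) c (.nom k) := rfl
      rw [show ((Comparison.ceq c).node (Path.nom j) (Path.nom k) : Node P N M C) = J from rfl,
        e1, e2, hJeq]
      exact Deriv.step (Step.ax (AxForm.eq j c k)) (by simp)
    | cneq c =>
      have hJeq : J = Node.neq (.nom j) c (.nom k) := rfl
      rw [show ((Comparison.cneq c).node (Path.nom j) (Path.nom k) : Node P N M C) = J from rfl]
      have e1 : (insert A (insert B (insert J Γ)) : Set (Node P N M C))
          = insert J (insert A (insert B Γ)) := by
        ext x; simp only [Set.mem_insert_iff]; tauto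
      rw [e1, hJeq]
      refine Deriv.step (Step.neqL (Γ := insert A (insert B Γ))
        (Δ := insert F (insert (Node.neq (.nom j) c (.nom k)) Δ)) j k c) ?_
      intro s hs
      simp only [List.mem_singleton] at hs
      subst hs
      have e2 : (insert (Node.eq (.nom j) c (.nom k))
            (insert F (insert (Node.neq (.nom j) c (.nom k)) Δ)) : Set (Node P N M C))
          = insert (Node.neq (.nom j) c (.nom k))
            (insert (Node.eq (.nom j) c (.nom k)) (insert F Δ)) := by
        ext x; simp only [Set.mem_insert_iff]; tauto
      rw [e2]
      refine Deriv.step (Step.neqR (Γ := insert A (insert B Γ))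
        (Δ := insert (Node.eq (.nom j) c (.nom k)) (insert F Δ)) j k c) ?_
      intro s hs
      simp only [List.mem_singleton] at hs
      subst hs
      exact Deriv.step (Step.ax (AxForm.eq j c k)) (by simp)
  -- Premise 2 of cut: F, Γ' ⊢ Δ (by weakening from h)
  have w1 : Deriv true (insert J (insert F Γ), Δ) :=
    Deriv.step (Step.wl J hadmJ) (by
      intro s hs; simp only [List.mem_singleton] at hs; subst hs; exact h)
  have w2 : Deriv true (insert B (insert J (insert F Γ)), Δ) :=
    Deriv.step (Step.wl B hadmB) (by
      intro s hs; simp only [List.mem_singleton] at hs; subst hs; exact w1)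
  have w3 : Deriv true (insert A (insert B (insert J (insert F Γ))), Δ) :=
    Deriv.step (Step.wl A hadmA) (by
      intro s hs; simp only [List.mem_singleton] at hs; subst hs; exact w2)
  have e3 : (insert A (insert B (insert J (insert F Γ))) : Set (Node P N M C))
      = insert F (insert A (insert B (insert J Γ))) := by
    ext x; simp only [Set.mem_insert_iff]; tauto
  rw [e3] at w3
  -- Cut
  have hcut := Deriv.step
    (Step.cutRule (Γ := insert A (insert B (insert J Γ))) (Δ := Δ)
      (Γ' := insert A (insert B (insert J Γ))) (Δ' := Δ) F hadmF rfl)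
    (by
      intro s hs
      simp only [List.mem_cons, List.mem_singleton, List.not_mem_nil, or_false] at hs
      rcases hs with hs | hs <;> subst hs
      · exact h1
      · exact w3)
  show Deriv true _
  rw [show (insert A (insert B (insert J Γ)) : Set (Node P N M C))
      = insert A (insert B (insert J Γ)) ∪ insert A (insert B (insert J Γ)) from
      (Set.union_self _).symm,
    show (Δ : Set (Node P N M C)) = Δ ∪ Δ from (Set.union_self _).symm]
  exact hcut

end HXPathD
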